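/- Let τ̂ : ℝ² → Sym₂(ℝ) be differentiable and τ = (1/(det J)²) J (τ̂ ∘ F⁻¹) Jᵀ its double contravariant Piola image under an affine map F with constant invertible Jacobian J. Then the row-wise divergence satisfies div τ = (1/(det J)²) J ((div τ̂) ∘ F⁻¹). -/
import Mathlib


open Matrix

/-- Partial derivative in coordinate direction `i` of a scalar field on ℝ². -/
noncomputable def pd (i : Fin 2) (f : (Fin 2 → ℝ) → ℝ) (x : Fin 2 → ℝ) : ℝ :=
  fderiv ℝ f x (Pi.single i 1)

/-- Row-wise divergence of a 2×2 matrix field. -/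
noncomputable def divM (τ : (Fin 2 → ℝ) → Matrix (Fin 2) (Fin 2) ℝ)
    (x : Fin 2 → ℝ) : Fin 2 → ℝ :=
  fun i => pd 0 (fun y => τ y i 0) x + pd 1 (fun y => τ y i 1) x

lemma decomp_vec (v : Fin 2 → ℝ) :
    v = v 0 • (Pi.single 0 1 : Fin 2 → ℝ) + v 1 • (Pi.single 1 1 : Fin 2 → ℝ) := by
  funext m; fin_cases m <;> simp

lemma clm_apply_decomp (φ : (Fin 2 → ℝ) →L[ℝ] ℝ) (v : Fin 2 → ℝ) :
    φ v = v 0 * φ (Pi.single 0 1) + v 1 * φ (Pi.single 1 1) := by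
  conv_lhs => rw [decomp_vec v]
  simp

theorem stmt_17 (J : Matrix (Fin 2) (Fin 2) ℝ) (b : Fin 2 → ℝ)
    (hJ : IsUnit J.det)
    (tauhat : (Fin 2 → ℝ) → Matrix (Fin 2) (Fin 2) ℝ)
    (hsym : ∀ y, (tauhat y)ᵀ = tauhat y)
    (hdiff : ∀ i j, Differentiable ℝ (fun y => tauhat y i j))
    (tau : (Fin 2 → ℝ) → Matrix (Fin 2) (Fin 2) ℝ)
    (htau : ∀ x, tau x = ((J.det) ^ 2)⁻¹ • (J * tauhat (J⁻¹ *ᵥ (x - b)) * Jᵀ)) :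
    ∀ x, divM tau x = ((J.det) ^ 2)⁻¹ • (J *ᵥ divM tauhat (J⁻¹ *ᵥ (x - b))) := by
  intro x
  set c : ℝ := ((J.det) ^ 2)⁻¹ with hc
  set g : (Fin 2 → ℝ) → Fin 2 → ℝ := fun y => J⁻¹ *ᵥ (y - b) with hgdef
  set M : (Fin 2 → ℝ) →L[ℝ] (Fin 2 → ℝ) := (Matrix.mulVecLin J⁻¹).toContinuousLinearMap with hM
  have hgd : HasFDerivAt g M x := by
    have h : g = fun y => M y - J⁻¹ *ᵥ b := by
      funext y; simp [g, M, Matrix.mulVec_sub]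
    rw [h]
    exact (M.hasFDerivAt).sub_const _
  -- derivative of each composed component
  have hT : ∀ k l : Fin 2, HasFDerivAt (fun y => tauhat (g y) k l)
      (((fderiv ℝ (fun y => tauhat y k l) (g x)).comp M)) x :=
    fun k l => ((hdiff k l (g x)).hasFDerivAt).comp x hgd
  -- abbreviation for partial derivatives of tauhat at g x
  set D : Fin 2 → Fin 2 → Fin 2 → ℝ :=
    fun k l m => fderiv ℝ (fun y => tauhat y k l) (g x) (Pi.single m 1) with hD
  -- derivative of tau components
  have htaud : ∀ i j : Fin 2, ∀ m : Fin 2,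
      pd m (fun y => tau y i j) x =
        c * (J i 0 * J j 0 * (((fderiv ℝ (fun y => tauhat y 0 0) (g x)).comp M) (Pi.single m 1))
           + J i 0 * J j 1 * (((fderiv ℝ (fun y => tauhat y 0 1) (g x)).comp M) (Pi.single m 1))
           + J i 1 * J j 0 * (((fderiv ℝ (fun y => tauhat y 1 0) (g x)).comp M) (Pi.single m 1))
           + J i 1 * J j 1 * (((fderiv ℝ (fun y => tauhat y 1 1) (g x)).comp M) (Pi.single m 1))) := by
    intro i j m
    have hfun : (fun y => tau y i j) = fun y =>
        c * (J i 0 * J j 0 * tauhat (g y) 0 0 + J i 0 * J j 1 * tauhat (g y) 0 1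
           + (J i 1 * J j 0 * tauhat (g y) 1 0 + J i 1 * J j 1 * tauhat (g y) 1 1)) := by
      funext y
      rw [htau y]
      simp only [Matrix.mul_apply, Fin.sum_univ_two, Matrix.transpose_apply, Matrix.smul_apply,
        smul_eq_mul]
      ring
    have hder : HasFDerivAt (fun y =>
        c * (J i 0 * J j 0 * tauhat (g y) 0 0 + J i 0 * J j 1 * tauhat (g y) 0 1
           + (J i 1 * J j 0 * tauhat (g y) 1 0 + J i 1 * J j 1 * tauhat (g y) 1 1)))
        (c • (((J i 0 * J j 0) • ((fderiv ℝ (fun y => tauhat y 0 0) (g x)).comp M)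
            + (J i 0 * J j 1) • ((fderiv ℝ (fun y => tauhat y 0 1) (g x)).comp M))
            + ((J i 1 * J j 0) • ((fderiv ℝ (fun y => tauhat y 1 0) (g x)).comp M)
            + (J i 1 * J j 1) • ((fderiv ℝ (fun y => tauhat y 1 1) (g x)).comp M)))) x :=
      ((((hT 0 0).const_mul (J i 0 * J j 0)).add ((hT 0 1).const_mul (J i 0 * J j 1))).add
        (((hT 1 0).const_mul (J i 1 * J j 0)).add ((hT 1 1).const_mul (J i 1 * J j 1)))).const_mul c
    rw [pd, hfun, hder.fderiv]
    simp [smul_eq_mul]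
    ring
  -- relations from J⁻¹ * J = 1
  have hinv : J⁻¹ * J = 1 := Matrix.nonsing_inv_mul J hJ
  have hrel : ∀ m l : Fin 2, J⁻¹ m 0 * J 0 l + J⁻¹ m 1 * J 1 l = (1 : Matrix (Fin 2) (Fin 2) ℝ) m l := by
    intro m l
    have := congrFun (congrFun hinv m) l
    simpa [Matrix.mul_apply, Fin.sum_univ_two] using this
  funext i
  -- expand LHS
  rw [divM]
  rw [htaud i 0 0, htaud i 1 1]
  -- evaluate M (Pi.single m 1) and decompose
  have hMval : ∀ (k l m : Fin 2),
      ((fderiv ℝ (fun y => tauhat y k l) (g x)).comp M) (Pi.single m 1) =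
        J⁻¹ 0 m * D k l 0 + J⁻¹ 1 m * D k l 1 := by
    intro k l m
    have hMv : M (Pi.single m 1) = fun p => J⁻¹ p m := by
      funext p
      simp [M, Matrix.mulVecLin, Matrix.mulVec, dotProduct, Fin.sum_univ_two]
      fin_cases m <;> simp
    rw [ContinuousLinearMap.comp_apply, hMv,
      clm_apply_decomp (fderiv ℝ (fun y => tauhat y k l) (g x)) (fun p => J⁻¹ p m)]
  simp only [hMval]
  -- expand RHS
  simp only [Pi.smul_apply, Matrix.mulVec, dotProduct, Fin.sum_univ_two, divM, pd, smul_eq_mul]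
  have h00 := hrel 0 0; have h01 := hrel 0 1; have h10 := hrel 1 0; have h11 := hrel 1 1
  simp only [Matrix.one_apply_eq, Matrix.one_apply_ne, ne_eq] at h00 h01 h10 h11
  norm_num at h01 h10
  show _ = c * (J i 0 * (D 0 0 0 + D 0 1 1) + J i 1 * (D 1 0 0 + D 1 1 1))
  linear_combination (c * (J i 0 * D 0 0 0 + J i 1 * D 1 0 0)) * h00
    + (c * (J i 0 * D 0 0 1 + J i 1 * D 1 0 1)) * h10
    + (c * (J i 0 * D 0 1 0 + J i 1 * D 1 1 0)) * h01
    + (c * (J i 0 * D 0 1 1 + J i 1 * D 1 1 1)) * h11
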